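/- Under Assumption 1, if q({M}) > 0, then for every initial distribution p₀ ∈ P(𝓜) the sequence (p_i)_{i≥0} converges in total variation to p*. -/

import Mathlib

open MeasureTheory Set Filter

/-- Selective advantage `s(x,u) = w(x,u) / ∫ w(y,u) u(dy)` if the mean fitness is
positive, and `1` otherwise. -/
noncomputable def sel (w : ℝ → MeasureTheory.Measure ℝ → ℝ)
    (u : MeasureTheory.Measure ℝ) (x : ℝ) : ℝ :=
  if 0 < ∫ y, w y u ∂u then w x u / ∫ y, w y u ∂u else 1

/-- The sequence of type distributions:
`p_i(dx) = (1-β) s(x,p_{i-1}) p_{i-1}(dx) + β q(dx)`. -/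
noncomputable def evol (w : ℝ → MeasureTheory.Measure ℝ → ℝ) (β : ℝ)
    (q p₀ : MeasureTheory.Measure ℝ) : ℕ → MeasureTheory.Measure ℝ
  | 0 => p₀
  | i + 1 =>
      ENNReal.ofReal (1 - β) •
          ((evol w β q p₀ i).withDensity fun x =>
            ENNReal.ofReal (sel w (evol w β q p₀ i) x))
        + ENNReal.ofReal β • q

/-- Convergence in total variation (uniform convergence over all measurable sets). -/
def TendstoTV (p : ℕ → MeasureTheory.Measure ℝ) (μ : MeasureTheory.Measure ℝ) : Prop :=
  ∀ ε : ℝ, 0 < ε → ∃ N : ℕ, ∀ i ≥ N, ∀ A : Set ℝ, MeasurableSet A →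
    |((p i) A).toReal - (μ A).toReal| < ε

/-- Weak convergence of measures (tested against bounded continuous functions). -/
def TendstoWeak (p : ℕ → MeasureTheory.Measure ℝ) (μ : MeasureTheory.Measure ℝ) : Prop :=
  ∀ f : BoundedContinuousFunction ℝ ℝ,
    Filter.Tendsto (fun i => ∫ x, f x ∂(p i)) Filter.atTop (nhds (∫ x, f x ∂μ))

/-- Assumption 1: if `v` restricted to `[0,M)` is a component of `u` restricted to `[0,M)`,
then `s(·,u) ≥ s(·,v)` on `[0,M]`. -/
def Assumption1 (M : ℝ) (w : ℝ → MeasureTheory.Measure ℝ → ℝ) : Prop :=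
  ∀ u v : MeasureTheory.Measure ℝ,
    IsProbabilityMeasure u → IsProbabilityMeasure v →
    u ((Set.Icc 0 M)ᶜ) = 0 → v ((Set.Icc 0 M)ᶜ) = 0 →
    v.restrict (Set.Ico 0 M) ≤ u.restrict (Set.Ico 0 M) →
    ∀ x ∈ Set.Icc (0:ℝ) M, sel w v x ≤ sel w u x

/-- Assumption 2: for every `0 ≤ a < M` and `0 < ε < 1` there is `c(a,ε) > 1` such that
`s(M,u) ≥ c(a,ε) s(M,v)` whenever `v_{[0,M)} ≺ u_{[0,M)}` and `D_u(a) ≥ D_v(a) + ε`. -/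
def Assumption2 (M : ℝ) (w : ℝ → MeasureTheory.Measure ℝ → ℝ) : Prop :=
  ∀ a : ℝ, 0 ≤ a → a < M → ∀ ε : ℝ, 0 < ε → ε < 1 → ∃ c : ℝ, 1 < c ∧
    ∀ u v : MeasureTheory.Measure ℝ,
      IsProbabilityMeasure u → IsProbabilityMeasure v →
      u ((Set.Icc 0 M)ᶜ) = 0 → v ((Set.Icc 0 M)ᶜ) = 0 →
      v.restrict (Set.Ico 0 M) ≤ u.restrict (Set.Ico 0 M) →
      (v (Set.Icc 0 a)).toReal + ε ≤ (u (Set.Icc 0 a)).toReal →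
      c * sel w v M ≤ sel w u M

/-!
Start the evolution from `δ_M` as well as from `p₀`. Under Assumption 1 the order `≺` on `[0, M)`
propagates, so `p̂_i ≺ p_i` off the atom `M` for all `i`, and the total-variation distance between
`p_i` and `p̂_i` is just the excess `p̂_i{M} - p_i{M}` of the atom. Both atoms follow
`x_{i+1} = (1 - β) s(M, ·) x_i + β q{M}` with `s(M, p̂_i) ≤ s(M, p_i)` and `s(M, p̂_i) p̂_i{M} ≤ 1`;
the fresh mass `β q{M} > 0` makes the relative gap `(p̂_i{M} - p_i{M}) / p̂_i{M}` contract by the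
factor `(1 - β) / (1 - β + β q{M})` at every step.
-/

open scoped ENNReal Topology

lemma withDensity_le_withDensity {α : Type*} [MeasurableSpace α] {μ ν : Measure α}
    {f g : α → ℝ≥0∞} (hμν : ν ≤ μ) (hfg : f ≤ᵐ[ν] g) : ν.withDensity f ≤ μ.withDensity g := by
  refine (withDensity_mono hfg).trans (Measure.le_iff.2 fun s hs => ?_)
  rw [withDensity_apply _ hs, withDensity_apply _ hs]
  exact lintegral_mono' (Measure.restrict_mono subset_rfl hμν) le_rfl

lemma abs_measureReal_sub_le_of_restrict_compl_singleton_le {α : Type*} [MeasurableSpace α]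
    [MeasurableSingletonClass α] {μ ν : Measure α} [IsProbabilityMeasure μ]
    [IsProbabilityMeasure ν] {x₀ : α} (h : ν.restrict {x₀}ᶜ ≤ μ.restrict {x₀}ᶜ)
    {A : Set α} (hA : MeasurableSet A) :
    |μ.real A - ν.real A| ≤ ν.real {x₀} - μ.real {x₀} := by
  have away : ∀ B ⊆ ({x₀}ᶜ : Set α), ν.real B ≤ μ.real B := fun B hB => by
    have := h B
    rw [Measure.restrict_eq_self _ hB, Measure.restrict_eq_self _ hB] at this
    exact ENNReal.toReal_mono (measure_ne_top μ B) this
  have key : ∀ B, MeasurableSet B → x₀ ∉ B →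
      |μ.real B - ν.real B| ≤ ν.real {x₀} - μ.real {x₀} := by
    intro B hB hx₀
    have hBS : B ⊆ {x₀}ᶜ := fun x hx h' => hx₀ (h' ▸ hx)
    have hsplit : ∀ ξ : Measure α, [IsProbabilityMeasure ξ] →
        ξ.real B + ξ.real ({x₀}ᶜ \ B) = 1 - ξ.real {x₀} := fun ξ _ => by
      rw [measureReal_add_sdiff hB, union_eq_right.2 hBS,
        probReal_compl_eq_one_sub (measurableSet_singleton x₀)]
    have h₁ := away B hBS
    have h₂ := away ({x₀}ᶜ \ B) sdiff_subset
    have h₃ := hsplit μ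
    have h₄ := hsplit ν
    rw [abs_le]
    constructor <;> linarith
  by_cases hx₀ : x₀ ∈ A
  · have := key Aᶜ hA.compl (not_not_intro hx₀)
    rwa [probReal_compl_eq_one_sub hA, probReal_compl_eq_one_sub hA, sub_sub_sub_cancel_left,
      abs_sub_comm] at this
  · exact key A hA hx₀

lemma restrict_compl_singleton_eq_restrict_Ico {μ : Measure ℝ} {M : ℝ}
    (hμ : μ (Icc 0 M)ᶜ = 0) : μ.restrict {M}ᶜ = μ.restrict (Ico 0 M) := by
  have hIco : ({M}ᶜ ∩ Icc 0 M : Set ℝ) = Ico 0 M := by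
    ext x
    simp only [mem_inter_iff, mem_compl_iff, mem_singleton_iff, mem_Icc, mem_Ico,
      lt_iff_le_and_ne]
    tauto
  refine Measure.restrict_congr_set ?_
  simpa [hIco] using (EventuallyEq.refl (ae μ) ({M}ᶜ : Set ℝ)).inter (ae_eq_univ.2 hμ).symm

lemma measureReal_singleton_le_of_restrict_Ico_le {μ ν : Measure ℝ} [IsProbabilityMeasure μ]
    [IsProbabilityMeasure ν] {M : ℝ} (hμ : μ (Icc 0 M)ᶜ = 0) (hν : ν (Icc 0 M)ᶜ = 0)
    (h : ν.restrict (Ico 0 M) ≤ μ.restrict (Ico 0 M)) : μ.real {M} ≤ ν.real {M} := by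
  have hle := h univ
  rw [← restrict_compl_singleton_eq_restrict_Ico hμ,
    ← restrict_compl_singleton_eq_restrict_Ico hν, Measure.restrict_apply_univ,
    Measure.restrict_apply_univ] at hle
  have hle' : ν.real {M}ᶜ ≤ μ.real {M}ᶜ := ENNReal.toReal_mono (measure_ne_top μ _) hle
  rw [probReal_compl_eq_one_sub (measurableSet_singleton M),
    probReal_compl_eq_one_sub (measurableSet_singleton M)] at hle'
  linarith

/-- The relative gap `(b - a) / b` contracts because, by `ŝ b ≤ 1`, the fresh mass `c` is at least
the fraction `c / (1 - β + c)` of the next `b`. -/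
lemma relative_gap_succ_le {β c a b s ŝ : ℝ} (hβ : β < 1) (hc : 0 < c) (ha : 0 ≤ a)
    (hab : a ≤ b) (hb : 0 < b) (hŝ : 0 ≤ ŝ) (hŝs : ŝ ≤ s) (hŝb : ŝ * b ≤ 1) :
    ((1 - β) * (ŝ * b) + c - ((1 - β) * (s * a) + c)) / ((1 - β) * (ŝ * b) + c)
      ≤ (1 - β) / ((1 - β) + c) * ((b - a) / b) := by
  have h1β : 0 < 1 - β := sub_pos.2 hβ
  have hD : 0 < ((1 - β) + c) * b := by positivity
  rw [div_mul_div_comm, div_le_div_iff₀ (by positivity) hD]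
  nlinarith [mul_nonneg (mul_nonneg h1β.le (sub_nonneg.2 hab))
      (mul_nonneg hc.le (sub_nonneg.2 hŝb)),
    mul_nonneg (mul_nonneg (mul_nonneg h1β.le hŝ) (sub_nonneg.2 hab)) hc.le,
    mul_nonneg (mul_nonneg h1β.le (sub_nonneg.2 hŝs)) (mul_nonneg ha hD.le)]

lemma sub_le_pow_of_mass_recursion {β c : ℝ} (hβ : β < 1) (hc : 0 < c) {a b s ŝ : ℕ → ℝ}
    (ha : ∀ i, 0 ≤ a i) (hab : ∀ i, a i ≤ b i) (hb₀ : 0 < b 0) (hb₁ : ∀ i, b i ≤ 1)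
    (hŝ : ∀ i, 0 ≤ ŝ i) (hŝs : ∀ i, ŝ i ≤ s i) (hŝb : ∀ i, ŝ i * b i ≤ 1)
    (ha_succ : ∀ i, a (i + 1) = (1 - β) * (s i * a i) + c)
    (hb_succ : ∀ i, b (i + 1) = (1 - β) * (ŝ i * b i) + c) (i : ℕ) :
    b i - a i ≤ ((1 - β) / ((1 - β) + c)) ^ i := by
  have hb : ∀ i, 0 < b i := fun
    | 0 => hb₀
    | i + 1 => by rw [hb_succ]; nlinarith [mul_nonneg (hŝ i) ((ha i).trans (hab i))]
  have hrel : ∀ i, (b i - a i) / b i ≤ ((1 - β) / ((1 - β) + c)) ^ i := by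
    intro i
    induction i with
    | zero => simpa using div_le_one_of_le₀ (sub_le_self _ (ha 0)) (hb 0).le
    | succ i ih =>
      rw [ha_succ, hb_succ, pow_succ']
      exact (relative_gap_succ_le hβ hc (ha i) (hab i) (hb i) (hŝ i) (hŝs i) (hŝb i)).trans
        (mul_le_mul_of_nonneg_left ih (by have := sub_pos.2 hβ; positivity))
  refine le_trans ?_ (hrel i)
  rw [le_div_iff₀ (hb i)]
  nlinarith [hab i, hb₁ i]

lemma TendstoTV.of_abs_sub_le {p p' : ℕ → Measure ℝ} {μ : Measure ℝ} {δ : ℕ → ℝ}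
    (hp : TendstoTV p μ) (hδ : Tendsto δ atTop (𝓝 0))
    (h : ∀ i A, MeasurableSet A → |(p' i A).toReal - (p i A).toReal| ≤ δ i) :
    TendstoTV p' μ := by
  intro ε hε
  obtain ⟨N₁, hN₁⟩ := hp (ε / 2) (half_pos hε)
  obtain ⟨N₂, hN₂⟩ := eventually_atTop.1 (hδ.eventually (gt_mem_nhds (half_pos hε)))
  refine ⟨max N₁ N₂, fun i hi A hA => ?_⟩
  have h₁ := hN₁ i (le_of_max_le_left hi) A hA
  have h₂ := hN₂ i (le_of_max_le_right hi)
  have h₃ := abs_sub_le (p' i A).toReal (p i A).toReal (μ A).toReal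
  linarith [h i A hA]

section Selection

variable {w : ℝ → Measure ℝ → ℝ}

lemma sel_nonneg (hw : ∀ x u, 0 ≤ w x u) (u : Measure ℝ) (x : ℝ) : 0 ≤ sel w u x := by
  unfold sel
  split_ifs with h
  · exact div_nonneg (hw x u) h.le
  · exact zero_le_one

lemma lintegral_ofReal_sel (hw : ∀ x u, 0 ≤ w x u) (u : Measure ℝ) [IsProbabilityMeasure u] :
    ∫⁻ x, ENNReal.ofReal (sel w u x) ∂u = 1 := by
  by_cases h : 0 < ∫ y, w y u ∂u
  · have hint : Integrable (fun y => w y u) u := by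
      by_contra hni
      exact h.ne' (integral_undef hni)
    have hmean : ∫⁻ x, ENNReal.ofReal (w x u) ∂u = ENNReal.ofReal (∫ y, w y u ∂u) :=
      (ofReal_integral_eq_lintegral_ofReal hint (.of_forall fun x => hw x u)).symm
    have hpos : ENNReal.ofReal (∫ y, w y u ∂u) ≠ 0 := (ENNReal.ofReal_pos.mpr h).ne'
    simp only [sel, if_pos h, ENNReal.ofReal_div_of_pos h]
    simp only [div_eq_mul_inv]
    rw [lintegral_mul_const' _ _ (ENNReal.inv_ne_top.mpr hpos), hmean,
      ENNReal.mul_inv_cancel hpos ENNReal.ofReal_ne_top]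
  · simp [sel, if_neg h]

lemma sel_mul_measureReal_singleton_le_one (hw : ∀ x u, 0 ≤ w x u) (u : Measure ℝ)
    [IsProbabilityMeasure u] (x : ℝ) : sel w u x * u.real {x} ≤ 1 := by
  have h : ENNReal.ofReal (sel w u x) * u {x} ≤ 1 := by
    rw [← lintegral_ofReal_sel hw u,
      ← lintegral_singleton (fun y => ENNReal.ofReal (sel w u y))]
    exact setLIntegral_le_lintegral _ _
  have h' := ENNReal.toReal_mono ENNReal.one_ne_top h
  rwa [ENNReal.toReal_mul, ENNReal.toReal_ofReal (sel_nonneg hw u x), ENNReal.toReal_one] at h'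

end Selection

section Evolution

variable {w : ℝ → Measure ℝ → ℝ} {β : ℝ} {q : Measure ℝ}

lemma evol_succ_apply (p₀ : Measure ℝ) (i : ℕ) {A : Set ℝ} (hA : MeasurableSet A) :
    evol w β q p₀ (i + 1) A = ENNReal.ofReal (1 - β) *
        ∫⁻ x in A, ENNReal.ofReal (sel w (evol w β q p₀ i) x) ∂(evol w β q p₀ i)
      + ENNReal.ofReal β * q A := by
  simp [evol, withDensity_apply _ hA]

lemma isProbabilityMeasure_evol (hw : ∀ x u, 0 ≤ w x u) (hβ : β ∈ Icc (0 : ℝ) 1)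
    [IsProbabilityMeasure q] (p₀ : Measure ℝ) [IsProbabilityMeasure p₀] (i : ℕ) :
    IsProbabilityMeasure (evol w β q p₀ i) := by
  induction i with
  | zero => assumption
  | succ i ih =>
    constructor
    rw [evol_succ_apply p₀ i MeasurableSet.univ, Measure.restrict_univ,
      lintegral_ofReal_sel hw, measure_univ, mul_one, mul_one,
      ← ENNReal.ofReal_add (sub_nonneg.2 hβ.2) hβ.1, sub_add_cancel, ENNReal.ofReal_one]

lemma evol_compl_Icc {M : ℝ} (hq : q (Icc 0 M)ᶜ = 0) {p₀ : Measure ℝ}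
    (hp₀ : p₀ (Icc 0 M)ᶜ = 0) (i : ℕ) : evol w β q p₀ i (Icc 0 M)ᶜ = 0 := by
  induction i with
  | zero => exact hp₀
  | succ i ih =>
    rw [evol_succ_apply p₀ i measurableSet_Icc.compl, hq, setLIntegral_measure_zero _ _ ih]
    simp

lemma evol_succ_real_singleton (hw : ∀ x u, 0 ≤ w x u) (hβ : β ∈ Icc (0 : ℝ) 1)
    [IsFiniteMeasure q] (p₀ : Measure ℝ) (i : ℕ) [IsFiniteMeasure (evol w β q p₀ i)] (x : ℝ) :
    (evol w β q p₀ (i + 1)).real {x}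
      = (1 - β) * (sel w (evol w β q p₀ i) x * (evol w β q p₀ i).real {x})
        + β * q.real {x} := by
  rw [measureReal_def, evol_succ_apply p₀ i (measurableSet_singleton x), lintegral_singleton,
    ENNReal.toReal_add (by finiteness) (by finiteness), ENNReal.toReal_mul, ENNReal.toReal_mul,
    ENNReal.toReal_mul, ENNReal.toReal_ofReal (sub_nonneg.2 hβ.2), ENNReal.toReal_ofReal hβ.1,
    ENNReal.toReal_ofReal (sel_nonneg hw _ x), measureReal_def, measureReal_def]

lemma evol_restrict_Ico_le {M : ℝ} (hw : ∀ x u, 0 ≤ w x u) (hA1 : Assumption1 M w)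
    (hβ : β ∈ Icc (0 : ℝ) 1) [IsProbabilityMeasure q] (hq : q (Icc 0 M)ᶜ = 0)
    {p₀ p₀' : Measure ℝ} [IsProbabilityMeasure p₀] [IsProbabilityMeasure p₀']
    (hp₀ : p₀ (Icc 0 M)ᶜ = 0) (hp₀' : p₀' (Icc 0 M)ᶜ = 0)
    (h₀ : p₀'.restrict (Ico 0 M) ≤ p₀.restrict (Ico 0 M)) (i : ℕ) :
    (evol w β q p₀' i).restrict (Ico 0 M) ≤ (evol w β q p₀ i).restrict (Ico 0 M) := by
  induction i with
  | zero => exact h₀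
  | succ i ih =>
    have hsel := hA1 _ _ (isProbabilityMeasure_evol hw hβ p₀ i)
      (isProbabilityMeasure_evol hw hβ p₀' i) (evol_compl_Icc hq hp₀ i)
      (evol_compl_Icc hq hp₀' i) ih
    have hdens : (fun x => ENNReal.ofReal (sel w (evol w β q p₀' i) x))
        ≤ᵐ[(evol w β q p₀' i).restrict (Ico 0 M)]
          fun x => ENNReal.ofReal (sel w (evol w β q p₀ i) x) :=
      ae_restrict_of_forall_mem measurableSet_Ico fun x hx =>
        ENNReal.ofReal_le_ofReal (hsel x (Ico_subset_Icc_self hx))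
    simp only [evol, Measure.restrict_add, Measure.restrict_smul,
      restrict_withDensity measurableSet_Ico]
    gcongr
    exact withDensity_le_withDensity ih hdens

lemma evol_real_singleton_sub_le_pow {M : ℝ} (hM : 0 ≤ M) (hw : ∀ x u, 0 ≤ w x u)
    (hA1 : Assumption1 M w) (hβ : β ∈ Ioo (0 : ℝ) 1) [IsProbabilityMeasure q]
    (hq : q (Icc 0 M)ᶜ = 0) (hqM : 0 < q.real {M}) {p₀ p₀' : Measure ℝ}
    [IsProbabilityMeasure p₀] [IsProbabilityMeasure p₀']
    (hp₀ : p₀ (Icc 0 M)ᶜ = 0) (hp₀' : p₀' (Icc 0 M)ᶜ = 0)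
    (h₀ : p₀'.restrict (Ico 0 M) ≤ p₀.restrict (Ico 0 M)) (hp₀'M : 0 < p₀'.real {M}) (i : ℕ) :
    (evol w β q p₀' i).real {M} - (evol w β q p₀ i).real {M}
      ≤ ((1 - β) / ((1 - β) + β * q.real {M})) ^ i := by
  have hβ' : β ∈ Icc (0 : ℝ) 1 := Ioo_subset_Icc_self hβ
  have hprob := isProbabilityMeasure_evol (w := w) hw hβ' (q := q) p₀
  have hprob' := isProbabilityMeasure_evol (w := w) hw hβ' (q := q) p₀'
  have hord := evol_restrict_Ico_le hw hA1 hβ' hq hp₀ hp₀' h₀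
  refine sub_le_pow_of_mass_recursion hβ.2 (mul_pos hβ.1 hqM) (fun _ => measureReal_nonneg)
    (fun i => measureReal_singleton_le_of_restrict_Ico_le (evol_compl_Icc hq hp₀ i)
      (evol_compl_Icc hq hp₀' i) (hord i)) hp₀'M (fun _ => measureReal_le_one)
    (fun i => sel_nonneg hw _ M)
    (fun i => hA1 _ _ (hprob i) (hprob' i) (evol_compl_Icc hq hp₀ i) (evol_compl_Icc hq hp₀' i)
      (hord i) M ⟨hM, le_rfl⟩)
    (fun i => sel_mul_measureReal_singleton_le_one hw _ M)
    (fun i => evol_succ_real_singleton hw hβ' p₀ i M)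
    (fun i => evol_succ_real_singleton hw hβ' p₀' i M) i

end Evolution

theorem stmt1_general (M : ℝ) (hM : 0 < M) (β : ℝ) (hβ : β ∈ Set.Ioo (0:ℝ) 1)
    (q : MeasureTheory.Measure ℝ) [IsProbabilityMeasure q] (hq : q ((Set.Icc 0 M)ᶜ) = 0)
    (w : ℝ → MeasureTheory.Measure ℝ → ℝ)
    (hw_nonneg : ∀ x u, 0 ≤ w x u)
    (hA1 : Assumption1 M w)
    (pstar : MeasureTheory.Measure ℝ)
    (hpstar : TendstoTV (evol w β q (MeasureTheory.Measure.dirac M)) pstar)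
    (hqM : 0 < q ({M} : Set ℝ))
    (p₀ : MeasureTheory.Measure ℝ) [IsProbabilityMeasure p₀]
    (hp₀ : p₀ ((Set.Icc 0 M)ᶜ) = 0) :
    TendstoTV (evol w β q p₀) pstar := by
  have hβ' : β ∈ Icc (0 : ℝ) 1 := Ioo_subset_Icc_self hβ
  have hδ : Measure.dirac M (Icc 0 M)ᶜ = 0 := by simp [hM.le]
  have hδ₀ : (Measure.dirac M).restrict (Ico 0 M) ≤ p₀.restrict (Ico 0 M) := by
    rw [Measure.restrict_eq_zero.2 (by simp)]
    exact Measure.zero_le _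
  have hqM' : 0 < q.real {M} := ENNReal.toReal_pos hqM.ne' (measure_ne_top q _)
  have hprob := isProbabilityMeasure_evol (w := w) hw_nonneg hβ' (q := q) p₀
  have hprob' := isProbabilityMeasure_evol (w := w) hw_nonneg hβ' (q := q) (Measure.dirac M)
  have h1β : 0 < 1 - β := sub_pos.2 hβ.2
  have hc : 0 < β * q.real {M} := mul_pos hβ.1 hqM'
  have hκ : (1 - β) / ((1 - β) + β * q.real {M}) < 1 := (div_lt_one (by linarith)).2 (by linarith)
  refine hpstar.of_abs_sub_le (tendsto_pow_atTop_nhds_zero_of_lt_one (by positivity) hκ)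
    fun i A hA => ?_
  have hord := evol_restrict_Ico_le hw_nonneg hA1 hβ' hq hp₀ hδ hδ₀ i
  rw [← restrict_compl_singleton_eq_restrict_Ico (evol_compl_Icc hq hp₀ i),
    ← restrict_compl_singleton_eq_restrict_Ico (evol_compl_Icc hq hδ i)] at hord
  exact (abs_measureReal_sub_le_of_restrict_compl_singleton_le hord hA).trans
    (evol_real_singleton_sub_le_pow hM.le hw_nonneg hA1 hβ hq hqM' hp₀ hδ hδ₀
      (by simp [measureReal_def]) i)

/-- Theorem 5 of the paper. Under Assumption 1, if `q({M}) > 0`, then for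
every initial distribution `p₀` the sequence `(p_i)` converges in total variation to `p*`,
the total-variation limit of the sequence started from `δ_M`. -/
theorem stmt1 (M : ℝ) (hM : 0 < M) (β : ℝ) (hβ : β ∈ Set.Ioo (0:ℝ) 1)
    (q : MeasureTheory.Measure ℝ) [IsProbabilityMeasure q] (hq : q ((Set.Icc 0 M)ᶜ) = 0)
    (w : ℝ → MeasureTheory.Measure ℝ → ℝ)
    (hw_nonneg : ∀ x u, 0 ≤ w x u)
    (hw_meas : ∀ u, Measurable fun x => w x u)
    (hA1 : Assumption1 M w)
    (pstar : MeasureTheory.Measure ℝ) [IsProbabilityMeasure pstar]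
    (hpstar : TendstoTV (evol w β q (MeasureTheory.Measure.dirac M)) pstar)
    (hqM : 0 < q ({M} : Set ℝ))
    (p₀ : MeasureTheory.Measure ℝ) [IsProbabilityMeasure p₀]
    (hp₀ : p₀ ((Set.Icc 0 M)ᶜ) = 0) :
    TendstoTV (evol w β q p₀) pstar :=
  stmt1_general M hM β hβ q hq w hw_nonneg hA1 pstar hpstar hqM p₀ hp₀
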